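/- Under the two-level cascade model with β₀, β₁ > 0 and α₀ > 0, the precision of the cascade detector, p·β₁β₀ / (p·β₁β₀ + (1-p)·FPR_cascade) where FPR_cascade = (1-p)^7·α₁α₀ + (1-(1-p)^7)·β₁α₀, is at least the precision of the single-level detector p·β₀ / (p·β₀ + (1-p)·α₀), provided α₁ ≤ β₁ ≤ 1 and p ∈ (0,1). -/
import Mathlib


/-- With parameters in [0,1], α₁ ≤ β₁, p ∈ (0,1), and β₀, β₁, α₀ > 0, the precision of
the cascade detector is at least the precision of the single-level detector. -/
theorem cascade_precision_ge_single_level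
    (p α₀ β₀ α₁ β₁ : ℝ)
    (hp : p ∈ Set.Ioo (0 : ℝ) 1)
    (hα₀ : α₀ ∈ Set.Icc (0 : ℝ) 1) (hβ₀ : β₀ ∈ Set.Icc (0 : ℝ) 1)
    (hα₁ : α₁ ∈ Set.Icc (0 : ℝ) 1) (hβ₁ : β₁ ∈ Set.Icc (0 : ℝ) 1)
    (h : α₁ ≤ β₁)
    (hβ₀pos : 0 < β₀) (hβ₁pos : 0 < β₁) (hα₀pos : 0 < α₀) :
    p * β₀ / (p * β₀ + (1 - p) * α₀) ≤
      p * (β₁ * β₀) /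
        (p * (β₁ * β₀) +
          (1 - p) * ((1 - p) ^ 7 * (α₁ * α₀) + (1 - (1 - p) ^ 7) * (β₁ * α₀))) := by
  obtain ⟨hp0, hp1⟩ := hp
  have hq : (0:ℝ) < 1 - p := by linarith
  have hq7 : (0:ℝ) < (1 - p) ^ 7 := by positivity
  have hq7le : (1 - p) ^ 7 ≤ 1 := pow_le_one₀ hq.le (by linarith)
  have hα₁0 : 0 ≤ α₁ := hα₁.1
  have hfpr : 0 ≤ (1 - p) ^ 7 * (α₁ * α₀) + (1 - (1 - p) ^ 7) * (β₁ * α₀) := by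
    have : 0 ≤ 1 - (1 - p) ^ 7 := by linarith
    positivity
  have hd1 : 0 < p * β₀ + (1 - p) * α₀ := by positivity
  have hd2 : 0 < p * (β₁ * β₀) +
      (1 - p) * ((1 - p) ^ 7 * (α₁ * α₀) + (1 - (1 - p) ^ 7) * (β₁ * α₀)) := by
    have h1 : 0 < p * (β₁ * β₀) := by positivity
    nlinarith [mul_nonneg hq.le hfpr]
  rw [div_le_div_iff₀ hd1 hd2]
  have key : (1 - p) ^ 7 * (α₁ * α₀) + (1 - (1 - p) ^ 7) * (β₁ * α₀) ≤ β₁ * α₀ := by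
    nlinarith [mul_nonneg hq7.le (mul_nonneg (sub_nonneg.mpr h) hα₀pos.le)]
  nlinarith [mul_nonneg (mul_nonneg hp0.le hβ₀pos.le) (mul_nonneg hq.le (sub_nonneg.mpr key))]
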